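/- arXiv:1108.3389 — 3 statements merged into one kernel-verified Lean document; each statement's English description precedes it below -/
import Mathlib

section
/- For integers a, b > 1, ζ(a)·ζ(b) = ∑_{i=0}^{a-1} C(b-1+i, i)·ζ(a-i, b+i) + ∑_{j=0}^{b-1} C(a-1+j, j)·ζ(b-j, a+j), where C denotes the binomial coefficient and ζ(k₁,k₂) is the double zeta value. -/
/-- The Riemann zeta value ζ(k) = ∑_{n ≥ 1} 1/n^k. -/
noncomputable def zetaVal (a : ℕ) : ℝ :=
  ∑' n : ℕ+, 1 / ((n : ℕ) : ℝ) ^ a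

/-- The double zeta value ζ(k₁,k₂) = ∑_{0 < n₁ < n₂} 1/(n₁^{k₁} n₂^{k₂}). -/
noncomputable def doubleZeta (k₁ k₂ : ℕ) : ℝ :=
  ∑' p : {p : ℕ+ × ℕ+ // p.1 < p.2},
    1 / (((p.1.1 : ℕ) : ℝ) ^ k₁ * ((p.1.2 : ℕ) : ℝ) ^ k₂)

open scoped ENNReal

noncomputable def Sz (k l : ℕ) (x s : ℝ) : ℝ :=
  ∑ i ∈ Finset.range k, ((l - 1 + i).choose i : ℝ) / (x ^ (k - i) * s ^ (l + i))

lemma Srec (k l : ℕ) (hl : 1 ≤ l) (x s : ℝ) :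
    Sz (k+1) (l+1) x s = (1/s) * Sz k (l+1) x s + (1/s) * Sz (k+1) l x s := by
  unfold Sz
  rw [Finset.mul_sum, Finset.mul_sum,
    Finset.sum_range_succ' (fun i => ((l + 1 - 1 + i).choose i : ℝ) / (x ^ (k+1-i) * s ^ (l+1+i))) k,
    Finset.sum_range_succ' (fun i => (1/s) * (((l - 1 + i).choose i : ℝ) / (x ^ (k+1-i) * s ^ (l+i)))) k]
  have hterm : ∀ i ∈ Finset.range k,
      ((l + 1 - 1 + (i+1)).choose (i+1) : ℝ) / (x ^ (k+1-(i+1)) * s ^ (l+1+(i+1)))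
      = (1/s) * (((l + 1 - 1 + i).choose i : ℝ) / (x ^ (k-i) * s ^ (l+1+i)))
        + (1/s) * (((l - 1 + (i+1)).choose (i+1) : ℝ) / (x ^ (k+1-(i+1)) * s ^ (l+(i+1)))) := by
    intro i _
    have e1 : k + 1 - (i+1) = k - i := by omega
    have e2 : l + 1 - 1 = l := by omega
    have e3 : l - 1 + (i+1) = l + i := by omega
    have e4 : l + (i+1) = l + 1 + i := by omega
    have pascal : (l + 1 + i).choose (i+1) = (l+i).choose i + (l+i).choose (i+1) := by
      have := Nat.choose_succ_succ (l+i) i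
      rw [show l + 1 + i = l + i + 1 by omega]
      exact this
    simp only [e1, e2, e3, e4]
    rw [show l + 1 + (i+1) = (l+1+i)+1 by omega, pascal, pow_succ]
    push_cast
    ring
  rw [Finset.sum_congr rfl hterm, Finset.sum_add_distrib]
  have hc : ((l + 1 - 1 + 0).choose 0 : ℝ) / (x ^ (k+1-0) * s ^ (l+1+0))
      = (1/s) * (((l - 1 + 0).choose 0 : ℝ) / (x ^ (k+1-0) * s ^ (l+0))) := by
    simp only [Nat.choose_zero_right, Nat.cast_one, Nat.add_zero, Nat.sub_zero]
    rw [show l + 1 = l + 1 by rfl, pow_succ]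
    ring
  rw [hc]
  ring

lemma Sz_one_left (a : ℕ) (y s : ℝ) : Sz 1 a y s = 1 / (y * s ^ a) := by
  simp [Sz]

lemma Sz_succ_one (a : ℕ) (x s : ℝ) :
    Sz (a+1) 1 x s = 1 / (x ^ (a+1) * s) + (1/s) * Sz a 1 x s := by
  unfold Sz
  rw [Finset.sum_range_succ' (fun i => ((1 - 1 + i).choose i : ℝ) / (x ^ (a+1-i) * s ^ (1+i))) a,
    Finset.mul_sum]
  have hterm : ∀ i ∈ Finset.range a,
      ((1 - 1 + (i+1)).choose (i+1) : ℝ) / (x ^ (a+1-(i+1)) * s ^ (1+(i+1)))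
      = (1/s) * (((1 - 1 + i).choose i : ℝ) / (x ^ (a-i) * s ^ (1+i))) := by
    intro i _
    have e1 : a + 1 - (i+1) = a - i := by omega
    simp only [e1, Nat.sub_self, Nat.zero_add, Nat.choose_self, Nat.cast_one]
    rw [show 1 + (i+1) = (1+i)+1 by omega, pow_succ]
    ring
  rw [Finset.sum_congr rfl hterm]
  simp only [Nat.choose_self, Nat.cast_one, Nat.sub_zero, Nat.add_zero]
  ring

lemma base1 : ∀ a, 1 ≤ a → ∀ x y : ℝ, 0 < x → 0 < y →
    1/(x^a * y^1) = Sz a 1 x (x+y) + Sz 1 a y (x+y) := by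
  intro a ha
  induction a, ha using Nat.le_induction with
  | base =>
    intro x y hx hy
    have hs : 0 < x + y := by linarith
    rw [Sz_one_left, Sz_one_left]
    field_simp
    ring
  | succ a ha IH =>
    intro x y hx hy
    have hs : 0 < x + y := by linarith
    have h := IH x y hx hy
    rw [Sz_one_left] at h
    rw [Sz_succ_one, Sz_one_left]
    have expand : Sz a 1 x (x+y) = 1/(x^a*y^1) - 1/(y*(x+y)^a) := by linarith
    rw [expand, mul_sub]
    have hy' : y ≠ 0 := ne_of_gt hy
    have hs' : x + y ≠ 0 := ne_of_gt hs
    have hx' : x ≠ 0 := ne_of_gt hx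
    have cancel : (1/(x+y)) * (1/(y*(x+y)^a)) = 1/(y*(x+y)^(a+1)) := by
      rw [pow_succ, div_mul_div_comm, one_mul]
      ring
    have main : 1/(x^(a+1) * y^1) = 1/(x^(a+1)*(x+y)) + (1/(x+y))*(1/(x^a*y^1)) := by
      rw [pow_succ]
      field_simp
      ring
    rw [cancel]
    linarith [main]

lemma keyReal : ∀ b, 1 ≤ b → ∀ a, 1 ≤ a → ∀ x y : ℝ, 0 < x → 0 < y →
    1/(x^a * y^b) = Sz a b x (x+y) + Sz b a y (x+y) := by
  intro b hb
  induction b, hb using Nat.le_induction with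
  | base => intro a ha x y hx hy; exact base1 a ha x y hx hy
  | succ b hb IH =>
    intro a ha
    induction a, ha using Nat.le_induction with
    | base =>
      intro x y hx hy
      have h := base1 (b+1) (by omega) y x hy hx
      rw [add_comm y x] at h
      rw [mul_comm] at h
      linarith [h]
    | succ a ha IHa =>
      intro x y hx hy
      have hs : 0 < x + y := by linarith
      have h1 := IHa x y hx hy
      have h2 := IH (a+1) (by omega) x y hx hy
      rw [Srec a b hb x (x+y), Srec b a ha y (x+y)]
      have key : 1/(x^(a+1)*y^(b+1)) =
          (1/(x+y)) * (1/(x^a*y^(b+1))) + (1/(x+y)) * (1/(x^(a+1)*y^b)) := by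
        have hy' : y ≠ 0 := ne_of_gt hy
        have hx' : x ≠ 0 := ne_of_gt hx
        have hs' : x + y ≠ 0 := ne_of_gt hs
        rw [div_mul_div_comm, div_mul_div_comm, div_add_div _ _ (by positivity) (by positivity)]
        rw [div_eq_div_iff (by positivity) (by positivity)]
        ring
      rw [key, h1, h2]
      ring

def pairEquiv : ℕ+ × ℕ+ ≃ {p : ℕ+ × ℕ+ // p.1 < p.2} where
  toFun q := ⟨(q.1, q.1 + q.2), PNat.lt_add_right q.1 q.2⟩
  invFun p := (p.1.1, p.1.2 - p.1.1)
  left_inv q := by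
    ext
    · rfl
    · have : ((q.1 + q.2 - q.1 : ℕ+) : ℕ) = (q.2 : ℕ) := by
        rw [PNat.sub_coe]
        simp [PNat.lt_add_right q.1 q.2]
      exact_mod_cast this
  right_inv p := by
    apply Subtype.ext
    have h := p.2
    ext
    · rfl
    · have : ((p.1.1 + (p.1.2 - p.1.1) : ℕ+) : ℕ) = (p.1.2 : ℕ) := by
        rw [PNat.add_coe, PNat.sub_coe]
        have : (p.1.1 : ℕ) < (p.1.2 : ℕ) := h
        simp only [if_pos h]
        omega
      exact_mod_cast this

noncomputable def ZE (a : ℕ) : ℝ≥0∞ := ∑' n : ℕ+, 1 / ((n : ℕ) : ℝ≥0∞) ^ a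

noncomputable def DE (k₁ k₂ : ℕ) : ℝ≥0∞ :=
  ∑' p : {p : ℕ+ × ℕ+ // p.1 < p.2},
    1 / (((p.1.1 : ℕ) : ℝ≥0∞) ^ k₁ * ((p.1.2 : ℕ) : ℝ≥0∞) ^ k₂)

lemma DE_eq (k₁ k₂ : ℕ) :
    DE k₁ k₂ = ∑' q : ℕ+ × ℕ+,
      1 / (((q.1 : ℕ) : ℝ≥0∞) ^ k₁ * (((q.1 : ℕ) : ℝ≥0∞) + ((q.2 : ℕ) : ℝ≥0∞)) ^ k₂) := by
  rw [DE, ← pairEquiv.tsum_eq]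
  apply tsum_congr
  intro q
  have : (((q.1 + q.2 : ℕ+) : ℕ) : ℝ≥0∞) = ((q.1 : ℕ) : ℝ≥0∞) + ((q.2 : ℕ) : ℝ≥0∞) := by
    push_cast; ring
  simp [pairEquiv, this]

lemma ZE_ne_top (a : ℕ) (ha : 2 ≤ a) : ZE a ≠ ∞ := by
  have hsum : Summable (fun n : ℕ => 1 / ((n : ℝ)) ^ a) :=
    Real.summable_one_div_nat_pow.mpr (by omega)
  have hsum' : Summable (fun n : ℕ+ => 1 / (((n : ℕ) : ℝ)) ^ a) :=
    hsum.comp_injective PNat.coe_injective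
  have : ZE a = ENNReal.ofReal (∑' n : ℕ+, 1 / (((n : ℕ) : ℝ)) ^ a) := by
    rw [ENNReal.ofReal_tsum_of_nonneg (fun n => by positivity) hsum']
    apply tsum_congr
    intro n
    have hn : (0:ℝ) < ((n:ℕ):ℝ) := by exact_mod_cast n.pos
    rw [ENNReal.ofReal_div_of_pos (by positivity), ENNReal.ofReal_pow hn.le,
      ENNReal.ofReal_one, ENNReal.ofReal_natCast]
  rw [this]
  exact ENNReal.ofReal_ne_top

lemma zetaVal_eq (a : ℕ) : (∑' n : ℕ+, 1 / ((n : ℕ) : ℝ) ^ a) = (ZE a).toReal := by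
  rw [ZE, ENNReal.tsum_toReal_eq]
  · apply tsum_congr
    intro n
    rw [ENNReal.toReal_div, ENNReal.toReal_pow, ENNReal.toReal_one, ENNReal.toReal_natCast]
  · intro n
    have : (((n:ℕ):ℝ≥0∞)) ^ a ≠ 0 := by
      apply pow_ne_zero
      exact_mod_cast n.pos.ne'
    simp [ENNReal.div_eq_top, this]

lemma doubleZeta_eq (k₁ k₂ : ℕ) :
    (∑' p : {p : ℕ+ × ℕ+ // p.1 < p.2},
      1 / (((p.1.1 : ℕ) : ℝ) ^ k₁ * ((p.1.2 : ℕ) : ℝ) ^ k₂)) = (DE k₁ k₂).toReal := by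
  rw [DE, ENNReal.tsum_toReal_eq]
  · apply tsum_congr
    intro p
    rw [ENNReal.toReal_div, ENNReal.toReal_mul, ENNReal.toReal_pow, ENNReal.toReal_pow,
      ENNReal.toReal_one, ENNReal.toReal_natCast, ENNReal.toReal_natCast]
  · intro p
    have h1 : (((p.1.1:ℕ):ℝ≥0∞)) ^ k₁ ≠ 0 := by
      apply pow_ne_zero; exact_mod_cast p.1.1.pos.ne'
    have h2 : (((p.1.2:ℕ):ℝ≥0∞)) ^ k₂ ≠ 0 := by
      apply pow_ne_zero; exact_mod_cast p.1.2.pos.ne'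
    simp [ENNReal.div_eq_top, h1, h2]

lemma Sz_nonneg (k l : ℕ) (x s : ℝ) (hx : 0 ≤ x) (hs : 0 ≤ s) : 0 ≤ Sz k l x s := by
  apply Finset.sum_nonneg
  intro i _
  positivity

lemma ofReal_term (c : ℕ) (u v : ℝ) (hu : 0 < u) (hv : 0 < v) (k l : ℕ) :
    ENNReal.ofReal ((c:ℝ) / (u^k * v^l))
      = (c : ℝ≥0∞) / (ENNReal.ofReal u ^ k * ENNReal.ofReal v ^ l) := by
  rw [ENNReal.ofReal_div_of_pos (by positivity), ENNReal.ofReal_mul (by positivity),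
    ENNReal.ofReal_pow hu.le, ENNReal.ofReal_pow hv.le, ENNReal.ofReal_natCast]

lemma keyENN (a b : ℕ) (ha : 1 ≤ a) (hb : 1 ≤ b) (x y : ℕ+) :
    (1 : ℝ≥0∞) / (((x:ℕ):ℝ≥0∞)^a * ((y:ℕ):ℝ≥0∞)^b)
    = (∑ i ∈ Finset.range a, ((b-1+i).choose i : ℝ≥0∞) /
        (((x:ℕ):ℝ≥0∞)^(a-i) * (((x:ℕ):ℝ≥0∞) + ((y:ℕ):ℝ≥0∞))^(b+i)))
    + ∑ j ∈ Finset.range b, ((a-1+j).choose j : ℝ≥0∞) /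
        (((y:ℕ):ℝ≥0∞)^(b-j) * (((x:ℕ):ℝ≥0∞) + ((y:ℕ):ℝ≥0∞))^(a+j)) := by
  set u : ℝ := ((x:ℕ):ℝ) with hu_def
  set v : ℝ := ((y:ℕ):ℝ) with hv_def
  have hu : 0 < u := by rw [hu_def]; exact_mod_cast x.pos
  have hv : 0 < v := by rw [hv_def]; exact_mod_cast y.pos
  have hs : 0 < u + v := by linarith
  have hk := keyReal b hb a ha u v hu hv
  have hXY : ENNReal.ofReal (u + v) = ((x:ℕ):ℝ≥0∞) + ((y:ℕ):ℝ≥0∞) := by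
    rw [ENNReal.ofReal_add hu.le hv.le, hu_def, hv_def, ENNReal.ofReal_natCast,
      ENNReal.ofReal_natCast]
  have hX : ENNReal.ofReal u = ((x:ℕ):ℝ≥0∞) := by rw [hu_def, ENNReal.ofReal_natCast]
  have hY : ENNReal.ofReal v = ((y:ℕ):ℝ≥0∞) := by rw [hv_def, ENNReal.ofReal_natCast]
  calc (1 : ℝ≥0∞) / (((x:ℕ):ℝ≥0∞)^a * ((y:ℕ):ℝ≥0∞)^b)
      = ENNReal.ofReal (1 / (u^a * v^b)) := by
        have := ofReal_term 1 u v hu hv a b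
        rw [Nat.cast_one] at this
        rw [this, hX, hY, Nat.cast_one]
    _ = ENNReal.ofReal (Sz a b u (u+v) + Sz b a v (u+v)) := by rw [hk]
    _ = ENNReal.ofReal (Sz a b u (u+v)) + ENNReal.ofReal (Sz b a v (u+v)) := by
        rw [ENNReal.ofReal_add (Sz_nonneg _ _ _ _ hu.le hs.le) (Sz_nonneg _ _ _ _ hv.le hs.le)]
    _ = _ := by
        congr 1
        · rw [Sz, ENNReal.ofReal_sum_of_nonneg (fun i _ => by positivity)]
          apply Finset.sum_congr rfl
          intro i _
          rw [ofReal_term _ _ _ hu hs, hX, hXY]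
        · rw [Sz, ENNReal.ofReal_sum_of_nonneg (fun j _ => by positivity)]
          apply Finset.sum_congr rfl
          intro j _
          rw [ofReal_term _ _ _ hv hs, hY, hXY]

lemma mainENN (a b : ℕ) (ha : 1 ≤ a) (hb : 1 ≤ b) :
    ZE a * ZE b =
      (∑ i ∈ Finset.range a, ((b-1+i).choose i : ℝ≥0∞) * DE (a-i) (b+i)) +
      ∑ j ∈ Finset.range b, ((a-1+j).choose j : ℝ≥0∞) * DE (b-j) (a+j) := by
  have step1 : ZE a * ZE b = ∑' q : ℕ+ × ℕ+,
      (1 : ℝ≥0∞) / (((q.1:ℕ):ℝ≥0∞)^a * ((q.2:ℕ):ℝ≥0∞)^b) := by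
    rw [ZE, ZE, ← ENNReal.tsum_mul_right]
    rw [ENNReal.tsum_prod']
    apply tsum_congr; intro x
    rw [← ENNReal.tsum_mul_left]
    apply tsum_congr; intro y
    have hx0 : (((x:ℕ):ℝ≥0∞))^a ≠ 0 := pow_ne_zero _ (by exact_mod_cast x.pos.ne')
    have hxt : (((x:ℕ):ℝ≥0∞))^a ≠ ∞ := ENNReal.pow_ne_top (ENNReal.natCast_ne_top _)
    have hy0 : (((y:ℕ):ℝ≥0∞))^b ≠ 0 := pow_ne_zero _ (by exact_mod_cast y.pos.ne')
    rw [one_div, one_div, one_div, ENNReal.mul_inv (Or.inl hx0) (Or.inl hxt)]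
  rw [step1]
  have step2 : (∑' q : ℕ+ × ℕ+,
      (1 : ℝ≥0∞) / (((q.1:ℕ):ℝ≥0∞)^a * ((q.2:ℕ):ℝ≥0∞)^b)) =
      ∑' q : ℕ+ × ℕ+,
      ((∑ i ∈ Finset.range a, ((b-1+i).choose i : ℝ≥0∞) /
        (((q.1:ℕ):ℝ≥0∞)^(a-i) * (((q.1:ℕ):ℝ≥0∞) + ((q.2:ℕ):ℝ≥0∞))^(b+i)))
      + ∑ j ∈ Finset.range b, ((a-1+j).choose j : ℝ≥0∞) /
        (((q.2:ℕ):ℝ≥0∞)^(b-j) * (((q.1:ℕ):ℝ≥0∞) + ((q.2:ℕ):ℝ≥0∞))^(a+j))) :=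
    tsum_congr fun q => keyENN a b ha hb q.1 q.2
  rw [step2, ENNReal.tsum_add]
  congr 1
  · rw [Summable.tsum_finsetSum (fun i _ => ENNReal.summable)]
    apply Finset.sum_congr rfl
    intro i _
    rw [DE_eq]
    rw [← ENNReal.tsum_mul_left]
    apply tsum_congr; intro q
    rw [mul_one_div]
  · rw [Summable.tsum_finsetSum (fun j _ => ENNReal.summable)]
    apply Finset.sum_congr rfl
    intro j _
    rw [DE_eq, ← ENNReal.tsum_mul_left, ← (Equiv.prodComm ℕ+ ℕ+).tsum_eq]
    apply tsum_congr; intro q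
    simp only [Equiv.prodComm_apply, Prod.snd_swap, Prod.fst_swap]
    rw [mul_one_div, add_comm (((q.2:ℕ):ℝ≥0∞)) (((q.1:ℕ):ℝ≥0∞))]

/-- Euler's (shuffle) decomposition:
    ζ(a)·ζ(b) = ∑_{i=0}^{a-1} C(b-1+i, i)·ζ(a-i, b+i)
              + ∑_{j=0}^{b-1} C(a-1+j, j)·ζ(b-j, a+j) for a, b > 1. -/
theorem zeta_mul_zeta_eq_shuffle (a b : ℕ) (ha : 1 < a) (hb : 1 < b) :
    zetaVal a * zetaVal b =
      (∑ i ∈ Finset.range a, ((b - 1 + i).choose i : ℝ) * doubleZeta (a - i) (b + i)) +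
      (∑ j ∈ Finset.range b, ((a - 1 + j).choose j : ℝ) * doubleZeta (b - j) (a + j)) := by
  have h := mainENN a b (by omega) (by omega)
  have hfin : ((∑ i ∈ Finset.range a, ((b-1+i).choose i : ℝ≥0∞) * DE (a-i) (b+i)) +
      ∑ j ∈ Finset.range b, ((a-1+j).choose j : ℝ≥0∞) * DE (b-j) (a+j)) ≠ ∞ := by
    rw [← h]
    exact ENNReal.mul_ne_top (ZE_ne_top a ha) (ZE_ne_top b hb)
  obtain ⟨h1, h2⟩ := ENNReal.add_ne_top.mp hfin
  have h1' : ∀ i ∈ Finset.range a, ((b-1+i).choose i : ℝ≥0∞) * DE (a-i) (b+i) ≠ ∞ := by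
    intro i hi
    exact ((ENNReal.sum_lt_top.mp (lt_top_iff_ne_top.mpr h1)) i hi).ne
  have h2' : ∀ j ∈ Finset.range b, ((a-1+j).choose j : ℝ≥0∞) * DE (b-j) (a+j) ≠ ∞ := by
    intro j hj
    exact ((ENNReal.sum_lt_top.mp (lt_top_iff_ne_top.mpr h2)) j hj).ne
  have lhs_eq : zetaVal a * zetaVal b = (ZE a * ZE b).toReal := by
    rw [ENNReal.toReal_mul, zetaVal, zetaVal, zetaVal_eq, zetaVal_eq]
  rw [lhs_eq, h, ENNReal.toReal_add h1 h2, ENNReal.toReal_sum h1', ENNReal.toReal_sum h2']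
  congr 1
  · apply Finset.sum_congr rfl
    intro i _
    rw [ENNReal.toReal_mul, ENNReal.toReal_natCast, doubleZeta, doubleZeta_eq]
  · apply Finset.sum_congr rfl
    intro j _
    rw [ENNReal.toReal_mul, ENNReal.toReal_natCast, doubleZeta, doubleZeta_eq]
end

section
/- For integers a, b > 1, the two expressions for ζ(a)ζ(b) combine to give Euler's decomposition relation: ζ(a,b) + ζ(b,a) + ζ(a+b) = ∑_{i=0}^{a-1} C(b-1+i,i)·ζ(a-i,b+i) + ∑_{j=0}^{b-1} C(a-1+j,j)·ζ(b-j,a+j). -/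
namespace EulerAux

open Finset

lemma key_identity (p : ℝ) (A B : ℕ) :
    (∑ i ∈ range (A+1), ((B+i).choose i : ℝ) * (1-p)^i * p^(B+1)) +
    (∑ j ∈ range (B+1), ((A+j).choose j : ℝ) * p^j * (1-p)^(A+1)) = 1 := by
  induction A with
  | zero =>
    rw [Finset.sum_range_one]
    have h1 : ((B+0).choose 0 : ℝ) * (1-p)^0 * p^(B+1) = p^(B+1) := by simp
    have h2 : ∑ j ∈ range (B+1), ((0+j).choose j : ℝ) * p^j * (1-p)^(0+1)
        = (∑ j ∈ range (B+1), p^j) * (1-p) := by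
      rw [sum_mul]
      exact sum_congr rfl fun j _ => by simp [Nat.zero_add, Nat.choose_self]
    rw [h1, h2]
    have hg := geom_sum_mul p (B+1)
    linear_combination -hg
  | succ A ih =>
    rw [sum_range_succ]
    set G : ℕ → ℝ := fun j => ((A+1+j).choose j : ℝ) * p^(j+1) * (1-p)^(A+1) with hG
    have hterm : ∀ j ∈ range (B+1),
        ((A+j).choose j : ℝ) * p^j * (1-p)^(A+1)
          - ((A+1+j).choose j : ℝ) * p^j * (1-p)^(A+1+1)
        = G j - (if j = 0 then 0 else G (j-1)) := by
      intro j _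
      rcases j with _ | j'
      · simp only [if_pos rfl, hG]
        simp [pow_succ]
        ring
      · simp only [Nat.succ_ne_zero, if_neg, Nat.add_sub_cancel, hG]
        have pascal : (A+1+(j'+1)).choose (j'+1)
            = (A+(j'+1)).choose j' + (A+(j'+1)).choose (j'+1) := by
          rw [show A+1+(j'+1) = (A+(j'+1))+1 by ring]
          exact Nat.choose_succ_succ _ _
        rw [pascal]
        push_cast
        have hps : (1-p)^(A+1+1) = (1-p)^(A+1) * (1-p) := pow_succ _ _
        rw [hps]
        have h2 : A+1+j' = A+(j'+1) := by ring
        rw [h2]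
        ring
    have tele : ∑ j ∈ range (B+1),
        (((A+j).choose j : ℝ) * p^j * (1-p)^(A+1)
          - ((A+1+j).choose j : ℝ) * p^j * (1-p)^(A+1+1))
        = G B := by
      rw [sum_congr rfl hterm, sum_sub_distrib]
      have hH : ∑ j ∈ range (B+1), (if j = 0 then (0:ℝ) else G (j-1))
          = ∑ j ∈ range B, G j := by
        rw [Finset.sum_range_succ']
        simp
      rw [hH, sum_range_succ]
      ring
    rw [sum_sub_distrib] at tele
    have hc : (((B+(A+1)).choose (A+1)):ℝ) * (1-p)^(A+1) * p^(B+1) = G B := by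
      have hn : (B+(A+1)).choose (A+1) = (A+1+B).choose B := by
        rw [Nat.add_comm B (A+1), ← Nat.choose_symm (by omega : A+1 ≤ A+1+B)]
        congr 1
        omega
      rw [hG, hn]
      ring
    rw [hc]
    have hsum2 : ∑ j ∈ range (B+1), (((A+1+j).choose j : ℝ)) * p^j * (1-p)^(A+1+1)
        = ∑ j ∈ range (B+1), (((A+j).choose j : ℝ)) * p^j * (1-p)^(A+1) - G B := by
      linarith [tele]
    rw [hsum2]
    linarith [ih]

lemma partial_fraction (x y : ℝ) (hx : 0 < x) (hy : 0 < y) (A B : ℕ) :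
    1/(x^(A+1) * y^(B+1)) =
    (∑ i ∈ range (A+1), ((B+i).choose i : ℝ) / (x^(A+1-i) * (x+y)^(B+1+i))) +
    (∑ j ∈ range (B+1), ((A+j).choose j : ℝ) / (y^(B+1-j) * (x+y)^(A+1+j))) := by
  have hs : 0 < x + y := by linarith
  have hx0 : x ≠ 0 := ne_of_gt hx
  have hy0 : y ≠ 0 := ne_of_gt hy
  have hs0 : x + y ≠ 0 := ne_of_gt hs
  have hkey := key_identity (y/(x+y)) A B
  have h1p : 1 - y/(x+y) = x/(x+y) := by field_simp; ring
  rw [h1p] at hkey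
  have expand := congrArg (fun t => t / (x^(A+1) * y^(B+1))) hkey
  simp only [add_div, sum_div] at expand
  rw [← expand]
  congr 1
  · refine sum_congr rfl fun i hi => ?_
    have hi' : i ≤ A := by have := mem_range.mp hi; omega
    have hi2 : i < A + 1 := mem_range.mp hi
    rw [show x^(A+1) = x^(A+1-i) * x^i by rw [← pow_add]; congr 1; omega]
    rw [show (x+y)^(B+1+i) = (x+y)^(B+1) * (x+y)^i from pow_add _ _ _]
    rw [div_pow, div_pow]
    field_simp
  · refine sum_congr rfl fun j hj => ?_
    have hj2 : j < B + 1 := mem_range.mp hj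
    rw [show y^(B+1) = y^(B+1-j) * y^j by rw [← pow_add]; congr 1; omega]
    rw [show (x+y)^(A+1+j) = (x+y)^(A+1) * (x+y)^j from pow_add _ _ _]
    rw [div_pow, div_pow]
    field_simp

lemma summable_pnat (k : ℕ) (hk : 2 ≤ k) :
    Summable (fun n : ℕ+ => 1 / ((n : ℕ) : ℝ) ^ k) :=
  (Real.summable_one_div_nat_pow.mpr (by omega)).comp_injective PNat.coe_injective

lemma summable_F (k l : ℕ) (hk : 2 ≤ k) (hl : 2 ≤ l) :
    Summable (fun p : ℕ+ × ℕ+ => 1 / (((p.1 : ℕ) : ℝ) ^ k * ((p.2 : ℕ) : ℝ) ^ l)) := by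
  have h := Summable.mul_of_nonneg (summable_pnat k hk) (summable_pnat l hl)
    (fun n => by positivity) (fun n => by positivity)
  exact h.congr fun p => one_div_mul_one_div _ _

lemma prod_formula (k l : ℕ) (hk : 2 ≤ k) (hl : 2 ≤ l) :
    zetaVal k * zetaVal l
      = ∑' p : ℕ+ × ℕ+, 1 / (((p.1 : ℕ) : ℝ) ^ k * ((p.2 : ℕ) : ℝ) ^ l) := by
  rw [zetaVal, zetaVal,
    tsum_mul_tsum_of_summable_norm
      ((summable_pnat k hk).abs.congr fun n => (Real.norm_eq_abs _).symm)
      ((summable_pnat l hl).abs.congr fun n => (Real.norm_eq_abs _).symm)]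
  exact tsum_congr fun p => (one_div_mul_one_div _ _)

/-- the change-of-variables equivalence (m,n) ↦ (m, m+n). -/
def e1 : ℕ+ × ℕ+ ≃ {p : ℕ+ × ℕ+ // p.1 < p.2} where
  toFun q := ⟨(q.1, q.1 + q.2), PNat.lt_add_right _ _⟩
  invFun p := (p.1.1, p.1.2 - p.1.1)
  left_inv q := by
    ext
    · rfl
    · show q.1 + q.2 - q.1 = q.2
      rw [add_comm]
      exact PNat.add_sub
  right_inv p := by
    rcases p with ⟨⟨u, v⟩, h⟩
    apply Subtype.ext
    show (u, u + (v - u)) = (u, v)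
    rw [PNat.add_sub_of_lt h]

lemma doubleZeta_eq (k l : ℕ) :
    doubleZeta k l
      = ∑' q : ℕ+ × ℕ+,
          1 / (((q.1 : ℕ) : ℝ) ^ k * ((((q.1 + q.2) : ℕ+) : ℕ) : ℝ) ^ l) := by
  rw [doubleZeta]
  exact (Equiv.tsum_eq e1 _).symm

lemma summable_G (k l : ℕ) (hk : 1 ≤ k) (hl : 2 ≤ l) (hkl : 4 ≤ k + l) :
    Summable (fun q : ℕ+ × ℕ+ =>
      1 / (((q.1 : ℕ) : ℝ) ^ k * ((((q.1 + q.2) : ℕ+) : ℕ) : ℝ) ^ l)) := by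
  refine Summable.of_nonneg_of_le (fun q => by positivity) (fun q => ?_)
    (summable_F 2 2 le_rfl le_rfl)
  set m : ℝ := ((q.1 : ℕ) : ℝ) with hm
  set n : ℝ := ((q.2 : ℕ) : ℝ) with hn
  have hm1 : (1 : ℝ) ≤ m := by
    have h0 : 0 < (q.1 : ℕ) := q.1.pos
    rw [hm]
    exact_mod_cast h0
  have hn1 : (1 : ℝ) ≤ n := by
    have h0 : 0 < (q.2 : ℕ) := q.2.pos
    rw [hn]
    exact_mod_cast h0
  have hcast : ((((q.1 + q.2) : ℕ+) : ℕ) : ℝ) = m + n := by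
    rw [hm, hn, PNat.add_coe]; push_cast; ring
  rw [hcast]
  have hmn : (1 : ℝ) ≤ m + n := by linarith
  have key : m ^ 2 * n ^ 2 ≤ m ^ k * (m + n) ^ l := by
    rcases le_or_gt 2 k with h2k | h2k
    · have h1 : m ^ 2 ≤ m ^ k := pow_le_pow_right₀ hm1 h2k
      have h2 : n ^ 2 ≤ (m + n) ^ l := by
        calc n ^ 2 ≤ (m + n) ^ 2 := by nlinarith
        _ ≤ (m + n) ^ l := pow_le_pow_right₀ hmn hl
      exact mul_le_mul h1 h2 (by positivity) (by positivity)
    · have hk1 : k = 1 := by omega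
      have hl3 : 3 ≤ l := by omega
      have e0 : m * n ^ 2 ≤ (m + n) * (m + n) ^ 2 :=
        mul_le_mul (by linarith) (by nlinarith) (by positivity) (by linarith)
      have h3 : m ^ 2 * n ^ 2 ≤ m ^ 1 * (m + n) ^ 3 := by
        have h4 := mul_le_mul_of_nonneg_left e0 (by positivity : (0:ℝ) ≤ m)
        calc m ^ 2 * n ^ 2 = m * (m * n ^ 2) := by ring
        _ ≤ m * ((m + n) * (m + n) ^ 2) := h4
        _ = m ^ 1 * (m + n) ^ 3 := by ring
      calc m ^ 2 * n ^ 2 ≤ m ^ 1 * (m + n) ^ 3 := h3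
      _ ≤ m ^ k * (m + n) ^ l := by
        rw [hk1]
        exact mul_le_mul_of_nonneg_left (pow_le_pow_right₀ hmn hl3) (by positivity)
  apply one_div_le_one_div_of_le
  · positivity
  · exact key


def eswap : {p : ℕ+ × ℕ+ // p.1 < p.2} ≃ ↥{p : ℕ+ × ℕ+ | p.2 < p.1} where
  toFun x := ⟨(x.1.2, x.1.1), x.2⟩
  invFun x := ⟨(x.1.2, x.1.1), x.2⟩
  left_inv x := rfl
  right_inv x := rfl

def ediag : ℕ+ ≃ ↥{p : ℕ+ × ℕ+ | p.1 = p.2} where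
  toFun n := ⟨(n, n), rfl⟩
  invFun x := x.1.1
  left_inv n := rfl
  right_inv x := by
    rcases x with ⟨⟨u, v⟩, h⟩
    have h' : u = v := h
    subst h'
    rfl

lemma stuffle (a b : ℕ) (ha : 2 ≤ a) (hb : 2 ≤ b) :
    doubleZeta a b + doubleZeta b a + zetaVal (a + b)
      = ∑' p : ℕ+ × ℕ+, 1 / (((p.1 : ℕ) : ℝ) ^ a * ((p.2 : ℕ) : ℝ) ^ b) := by
  set F : ℕ+ × ℕ+ → ℝ := fun p => 1 / (((p.1 : ℕ) : ℝ) ^ a * ((p.2 : ℕ) : ℝ) ^ b) with hF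
  have hFsum : Summable F := summable_F a b ha hb
  set S : Set (ℕ+ × ℕ+) := {p | p.1 < p.2} with hS
  set T : Set (ℕ+ × ℕ+) := {p | p.2 < p.1} with hT
  set D : Set (ℕ+ × ℕ+) := {p | p.1 = p.2} with hD
  have hcompl : Sᶜ = T ∪ D := by
    ext p
    simp only [hS, hT, hD, Set.mem_compl_iff, Set.mem_setOf_eq, Set.mem_union, not_lt]
    constructor
    · intro h
      rcases lt_or_eq_of_le h with h' | h'
      · exact Or.inl h'
      · exact Or.inr h'.symm
    · rintro (h | h)
      · exact le_of_lt h
      · exact le_of_eq h.symm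
  have hsplit : (∑' x : S, F x) + (∑' x : ↥Sᶜ, F x) = ∑' p, F p :=
    Summable.tsum_add_tsum_compl (hFsum.subtype S) (hFsum.subtype Sᶜ)
  have hdisj : Disjoint T D := by
    rw [Set.disjoint_left]
    intro p hpT hpD
    have h1 : p.2 < p.1 := hpT
    have h2 : p.1 = p.2 := hpD
    exact absurd h2 (ne_of_gt h1)
  have hTD : (∑' x : ↥Sᶜ, F x) = (∑' x : T, F x) + (∑' x : D, F x) := by
    rw [hcompl]
    exact (hFsum.subtype T).tsum_union_disjoint hdisj (hFsum.subtype D)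
  have hdzab : doubleZeta a b = ∑' x : S, F x := rfl
  have hdzba : doubleZeta b a = ∑' x : T, F x := by
    rw [doubleZeta, ← Equiv.tsum_eq eswap (fun x : ↥T => F x)]
    refine tsum_congr fun x => ?_
    show 1 / (((x.1.1 : ℕ) : ℝ) ^ b * ((x.1.2 : ℕ) : ℝ) ^ a)
        = 1 / (((x.1.2 : ℕ) : ℝ) ^ a * ((x.1.1 : ℕ) : ℝ) ^ b)
    rw [mul_comm]
  have hdiag : zetaVal (a + b) = ∑' x : D, F x := by
    rw [zetaVal, ← Equiv.tsum_eq ediag (fun x : ↥D => F x)]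
    refine tsum_congr fun n => ?_
    show 1 / ((n : ℕ) : ℝ) ^ (a + b) = 1 / (((n : ℕ) : ℝ) ^ a * ((n : ℕ) : ℝ) ^ b)
    rw [pow_add]
  rw [hdzab, hdzba, hdiag, add_assoc, ← hTD]
  exact hsplit


lemma summable_G' (k l : ℕ) (hk : 1 ≤ k) (hl : 2 ≤ l) (hkl : 4 ≤ k + l) :
    Summable (fun q : ℕ+ × ℕ+ =>
      1 / (((q.2 : ℕ) : ℝ) ^ k * ((((q.1 + q.2) : ℕ+) : ℕ) : ℝ) ^ l)) := by
  have h := (Equiv.prodComm ℕ+ ℕ+).summable_iff.mpr (summable_G k l hk hl hkl)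
  refine h.congr fun q => ?_
  show 1 / (((q.2 : ℕ) : ℝ) ^ k * ((((q.2 + q.1) : ℕ+) : ℕ) : ℝ) ^ l)
      = 1 / (((q.2 : ℕ) : ℝ) ^ k * ((((q.1 + q.2) : ℕ+) : ℕ) : ℝ) ^ l)
  rw [add_comm q.2 q.1]

lemma doubleZeta_eq' (k l : ℕ) :
    doubleZeta k l
      = ∑' q : ℕ+ × ℕ+,
          1 / (((q.2 : ℕ) : ℝ) ^ k * ((((q.1 + q.2) : ℕ+) : ℕ) : ℝ) ^ l) := by
  rw [doubleZeta_eq k l,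
    ← Equiv.tsum_eq (Equiv.prodComm ℕ+ ℕ+)
      (fun q : ℕ+ × ℕ+ => 1 / (((q.1 : ℕ) : ℝ) ^ k * ((((q.1 + q.2) : ℕ+) : ℕ) : ℝ) ^ l))]
  refine tsum_congr fun q => ?_
  show 1 / (((q.2 : ℕ) : ℝ) ^ k * ((((q.2 + q.1) : ℕ+) : ℕ) : ℝ) ^ l)
      = 1 / (((q.2 : ℕ) : ℝ) ^ k * ((((q.1 + q.2) : ℕ+) : ℕ) : ℝ) ^ l)
  rw [add_comm q.2 q.1]

lemma shuffle (A B : ℕ) (hA : 1 ≤ A) (hB : 1 ≤ B) :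
    (∑' p : ℕ+ × ℕ+, 1 / (((p.1 : ℕ) : ℝ) ^ (A+1) * ((p.2 : ℕ) : ℝ) ^ (B+1)))
      = (∑ i ∈ range (A+1), ((B+i).choose i : ℝ) * doubleZeta (A+1-i) (B+1+i))
      + (∑ j ∈ range (B+1), ((A+j).choose j : ℝ) * doubleZeta (B+1-j) (A+1+j)) := by
  set g : ℕ → ℕ+ × ℕ+ → ℝ := fun i p => ((B+i).choose i : ℝ) *
    (1 / (((p.1 : ℕ) : ℝ) ^ (A+1-i) * ((((p.1 + p.2) : ℕ+) : ℕ) : ℝ) ^ (B+1+i))) with hg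
  set h : ℕ → ℕ+ × ℕ+ → ℝ := fun j p => ((A+j).choose j : ℝ) *
    (1 / (((p.2 : ℕ) : ℝ) ^ (B+1-j) * ((((p.1 + p.2) : ℕ+) : ℕ) : ℝ) ^ (A+1+j))) with hh
  have hgsum : ∀ i ∈ range (A+1), Summable (g i) := by
    intro i hi
    have hi' : i < A + 1 := mem_range.mp hi
    exact (summable_G (A+1-i) (B+1+i) (by omega) (by omega) (by omega)).mul_left _
  have hhsum : ∀ j ∈ range (B+1), Summable (h j) := by
    intro j hj
    have hj' : j < B + 1 := mem_range.mp hj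
    exact (summable_G' (B+1-j) (A+1+j) (by omega) (by omega) (by omega)).mul_left _
  have hpt : ∀ p : ℕ+ × ℕ+,
      1 / (((p.1 : ℕ) : ℝ) ^ (A+1) * ((p.2 : ℕ) : ℝ) ^ (B+1))
        = (∑ i ∈ range (A+1), g i p) + (∑ j ∈ range (B+1), h j p) := by
    intro p
    have hx : (0:ℝ) < ((p.1 : ℕ) : ℝ) := by exact_mod_cast p.1.pos
    have hy : (0:ℝ) < ((p.2 : ℕ) : ℝ) := by exact_mod_cast p.2.pos
    rw [partial_fraction _ _ hx hy A B]
    have hc : ((((p.1 + p.2) : ℕ+) : ℕ) : ℝ) = ((p.1 : ℕ) : ℝ) + ((p.2 : ℕ) : ℝ) := by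
      rw [PNat.add_coe]; push_cast; ring
    congr 1
    · refine sum_congr rfl fun i _ => ?_
      simp only [hg]
      rw [hc, div_eq_mul_one_div]
    · refine sum_congr rfl fun j _ => ?_
      simp only [hh]
      rw [hc, div_eq_mul_one_div]
  rw [tsum_congr hpt, Summable.tsum_add (summable_sum hgsum) (summable_sum hhsum),
    Summable.tsum_finsetSum hgsum, Summable.tsum_finsetSum hhsum]
  congr 1
  · refine sum_congr rfl fun i _ => ?_
    rw [hg]
    rw [tsum_mul_left, ← doubleZeta_eq]
  · refine sum_congr rfl fun j _ => ?_
    rw [hh]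
    rw [tsum_mul_left, ← doubleZeta_eq']


end EulerAux

/-- Euler's decomposition relation (simplest instance of the regularized
    double shuffle relations): for a, b > 1,
    ζ(a,b) + ζ(b,a) + ζ(a+b)
      = ∑_{i=0}^{a-1} C(b-1+i,i)·ζ(a-i,b+i) + ∑_{j=0}^{b-1} C(a-1+j,j)·ζ(b-j,a+j). -/
theorem euler_decomposition (a b : ℕ) (ha : 1 < a) (hb : 1 < b) :
    doubleZeta a b + doubleZeta b a + zetaVal (a + b) =
      (∑ i ∈ Finset.range a, ((b - 1 + i).choose i : ℝ) * doubleZeta (a - i) (b + i)) +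
      (∑ j ∈ Finset.range b, ((a - 1 + j).choose j : ℝ) * doubleZeta (b - j) (a + j)) := by
  obtain ⟨A, rfl⟩ : ∃ A, a = A + 1 := ⟨a - 1, by omega⟩
  obtain ⟨B, rfl⟩ : ∃ B, b = B + 1 := ⟨b - 1, by omega⟩
  rw [EulerAux.stuffle (A+1) (B+1) (by omega) (by omega),
    EulerAux.shuffle A B (by omega) (by omega)]
  simp only [Nat.add_sub_cancel]
end

section
/- The operation φ₂ ∘ φ₁ := φ₁(φ₂X₀φ₂⁻¹, X₁)·φ₂ on invertible elements of k⟨⟨X₀,X₁⟩⟩ with constant term 1 satisfies the alternative expression φ₂ ∘ φ₁ = φ₂·φ₁(X₀, φ₂⁻¹X₁φ₂), and is associative. -/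
/-!  We model the noncommutative formal power series ring k⟨⟨X₀,X₁⟩⟩ as the
space of coefficient functions `List (Fin 2) → k` on words in the two letters
`0 ↦ X₀`, `1 ↦ X₁`, with the convolution (Cauchy) product.  The coproduct Δ
with Δ(Xᵢ) = Xᵢ⊗1 + 1⊗Xᵢ satisfies, for any series φ,
Δ(φ) = φ ⊗̂ φ  ⇔  the coefficients of φ satisfy all shuffle relations;
we take this coefficientwise description as the definition of group-like. -/

/-- Words in the letters X₀, X₁. -/
abbrev Word := List (Fin 2)

variable {k : Type*} [Field k] [CharZero k]

/-- The unit power series 1. -/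
def oneS : Word → k := fun w => if w = [] then 1 else 0

/-- Convolution product of noncommutative power series. -/
def mulS (a b : Word → k) : Word → k :=
  fun w => ∑ i ∈ Finset.range (w.length + 1), a (w.take i) * b (w.drop i)

/-- The generator Xⱼ as a power series. -/
def XS (j : Fin 2) : Word → k := fun w => if w = [j] then 1 else 0

/-- The multiset of shuffles of two words. -/
def shuffle : Word → Word → Multiset Word
  | [], v => {v}
  | x :: u, [] => {x :: u}
  | x :: u, y :: v =>
      (shuffle u (y :: v)).map (x :: ·) + (shuffle (x :: u) v).map (y :: ·)
termination_by u v => u.length + v.length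

/-- A power series is group-like (Δφ = φ⊗φ, constant term 1) iff its
coefficients satisfy the shuffle relations. -/
def IsGroupLike (c : Word → k) : Prop :=
  c [] = 1 ∧ ∀ u v : Word, c u * c v = ((shuffle u v).map c).sum

/-- Powers of a power series. -/
def powS (a : Word → k) : ℕ → (Word → k)
  | 0 => oneS
  | n + 1 => mulS a (powS a n)

/-- Exponential of a power series with zero constant term. -/
def expS (a : Word → k) : Word → k :=
  fun w => ∑ n ∈ Finset.range (w.length + 1), (n.factorial : k)⁻¹ • powS a n w

/-- Inverse of a power series with constant term 1 (geometric series). -/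
def invS (a : Word → k) : Word → k :=
  fun w => ∑ n ∈ Finset.range (w.length + 1), (-1 : k) ^ n • powS (a - oneS) n w

/-- The product series Xᵢ₁⋯Xᵢₙ ↦ (images of the letters multiplied). -/
def wordEval (a b : Word → k) (w : Word) : Word → k :=
  (w.map (fun j => if j = 0 then a else b)).foldr mulS oneS

/-- Substitution φ(a,b): the continuous algebra homomorphism X₀ ↦ a, X₁ ↦ b
applied to φ, for substituted series a, b with zero constant term (only
words of length ≤ |u| contribute to the coefficient at u). -/
def subst (a b φ : Word → k) : Word → k :=
  fun u => ∑ n ∈ Finset.range (u.length + 1),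
    ∑ f : Fin n → Fin 2, φ (List.ofFn f) • wordEval a b (List.ofFn f) u

/-- X₀ as a series. -/
def X0S : Word → k := XS 0
/-- X₁ as a series. -/
def X1S : Word → k := XS 1
/-- X∞ = −X₀−X₁ as a series. -/
def XinfS : Word → k := -XS 0 - XS 1

/-- The GRT multiplication φ₂ ∘ φ₁ := φ₁(φ₂X₀φ₂⁻¹, X₁)·φ₂ on power series
with constant term 1. -/
def grtMul (φ₂ φ₁ : Word → k) : Word → k :=
  mulS (subst (mulS φ₂ (mulS X0S (invS φ₂))) X1S φ₁) φ₂

set_option linter.unusedSectionVars false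
set_option linter.unusedTactic false
set_option linter.unusedVariables false

/-! ### Ring lemmas -/

lemma oneS_mulS (a : Word → k) : mulS oneS a = a := by
  funext w
  simp only [mulS, oneS]
  rw [Finset.sum_eq_single 0]
  · simp
  · intro i hi hne
    rw [Finset.mem_range] at hi
    rw [if_neg, zero_mul]
    intro h
    have : min i w.length = 0 := by
      simpa [List.length_take] using congrArg List.length h
    omega
  · intro h; simp at h

lemma mulS_oneS (a : Word → k) : mulS a oneS = a := by
  funext w
  simp only [mulS, oneS]
  rw [Finset.sum_eq_single w.length]
  · simp
  · intro i hi hne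
    rw [if_neg, mul_zero]
    simp only [List.drop_eq_nil_iff]
    rw [Finset.mem_range] at hi
    omega
  · intro h; simp at h

lemma mulS_assoc (a b c : Word → k) : mulS (mulS a b) c = mulS a (mulS b c) := by
  funext w
  simp only [mulS]
  set F : ℕ → ℕ → k := fun j i =>
    a (w.take j) * (b ((w.drop j).take (i - j)) * c ((w.drop j).drop (i - j))) with hF
  have key : ∀ i ∈ Finset.range (w.length + 1),
      (∑ j ∈ Finset.range ((w.take i).length + 1), a ((w.take i).take j) * b ((w.take i).drop j)) * c (w.drop i)
      = ∑ j ∈ Finset.range (i + 1), F j i := by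
    intro i hi
    rw [Finset.mem_range] at hi
    rw [Finset.sum_mul]
    rw [List.length_take, Nat.min_eq_left (by omega)]
    refine Finset.sum_congr rfl fun j hj => ?_
    rw [Finset.mem_range] at hj
    rw [List.take_take, Nat.min_eq_left (by omega), List.drop_take, hF]
    have hdd : (w.drop j).drop (i - j) = w.drop i := by
      rw [List.drop_drop, Nat.add_sub_cancel' (by omega : j ≤ i)]
    rw [← hdd, mul_assoc]
  rw [Finset.sum_congr rfl key]
  have swap : ∑ i ∈ Finset.range (w.length + 1), ∑ j ∈ Finset.range (i + 1), F j i
      = ∑ j ∈ Finset.range (w.length + 1), ∑ i ∈ Finset.Ico j (w.length + 1), F j i := by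
    simp only [Finset.range_eq_Ico]
    exact (Finset.sum_Ico_Ico_comm 0 (w.length + 1) F).symm
  rw [swap]
  refine Finset.sum_congr rfl fun j hj => ?_
  rw [Finset.mem_range] at hj
  rw [Finset.sum_Ico_eq_sum_range, ← Finset.mul_sum]
  congr 1
  rw [List.length_drop, show w.length + 1 - j = w.length - j + 1 by omega]
  refine Finset.sum_congr rfl fun m hm => ?_
  simp [F, Nat.add_sub_cancel_left]

lemma mulS_apply_nil (a b : Word → k) : mulS a b [] = a [] * b [] := by
  simp [mulS]

lemma mulS_add_left (a b c : Word → k) : mulS (a + b) c = mulS a c + mulS b c := by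
  funext w
  simp [mulS, add_mul, Finset.sum_add_distrib]

lemma mulS_add_right (a b c : Word → k) : mulS a (b + c) = mulS a b + mulS a c := by
  funext w
  simp [mulS, mul_add, Finset.sum_add_distrib]

lemma mulS_sum_left {ι : Type*} (s : Finset ι) (f : ι → Word → k) (b : Word → k) :
    mulS (∑ i ∈ s, f i) b = ∑ i ∈ s, mulS (f i) b := by
  funext w
  simp only [mulS, Finset.sum_apply, Finset.sum_mul]
  rw [Finset.sum_comm]

lemma mulS_sum_right {ι : Type*} (s : Finset ι) (a : Word → k) (f : ι → Word → k) :
    mulS a (∑ i ∈ s, f i) = ∑ i ∈ s, mulS a (f i) := by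
  funext w
  simp only [mulS, Finset.sum_apply, Finset.mul_sum]
  rw [Finset.sum_comm]

lemma mulS_smul_left (c : k) (a b : Word → k) : mulS (c • a) b = c • mulS a b := by
  funext w
  simp only [mulS, Pi.smul_apply, smul_eq_mul, Finset.mul_sum, mul_assoc]

lemma mulS_smul_right (c : k) (a b : Word → k) : mulS a (c • b) = c • mulS a b := by
  funext w
  simp only [mulS, Pi.smul_apply, smul_eq_mul, Finset.mul_sum]
  refine Finset.sum_congr rfl fun i _ => by ring

lemma mulS_congr {a a' b b' : Word → k} {w : Word}
    (ha : ∀ u : Word, u.length ≤ w.length → a u = a' u)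
    (hb : ∀ u : Word, u.length ≤ w.length → b u = b' u) :
    mulS a b w = mulS a' b' w := by
  simp only [mulS]
  refine Finset.sum_congr rfl fun i hi => ?_
  rw [ha _ (by rw [List.length_take]; omega), hb _ (by rw [List.length_drop]; omega)]

/-! ### Inverses -/

lemma powS_succ' (x : Word → k) (n : ℕ) : powS x (n + 1) = mulS (powS x n) x := by
  induction n with
  | zero => show mulS x oneS = mulS oneS x; rw [mulS_oneS, oneS_mulS]
  | succ n ih =>
    show mulS x (powS x (n + 1)) = mulS (powS x (n + 1)) x
    conv_lhs => rw [ih]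
    rw [← mulS_assoc]
    rfl

lemma powS_eq_zero (x : Word → k) (hx : x [] = 0) {n : ℕ} {w : Word} (h : w.length < n) :
    powS x n w = 0 := by
  induction n generalizing w with
  | zero => omega
  | succ n ih =>
    show mulS x (powS x n) w = 0
    rw [mulS]
    refine Finset.sum_eq_zero fun i hi => ?_
    rw [Finset.mem_range] at hi
    rcases Nat.eq_zero_or_pos i with rfl | hpos
    · rw [List.take_zero, hx, zero_mul]
    · rw [ih (by rw [List.length_drop]; omega), mul_zero]

lemma invS_apply_nil (a : Word → k) : invS a [] = 1 := by
  simp [invS, powS, oneS]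

lemma invS_ext (a : Word → k) (ha : a [] = 1) (u : Word) {N : ℕ} (hN : u.length < N) :
    invS a u = ∑ n ∈ Finset.range N, (-1 : k) ^ n • powS (a - oneS) n u := by
  rw [invS]
  apply Finset.sum_subset
  · intro n hn
    simp only [Finset.mem_range] at *
    omega
  · intro n hn hnot
    simp only [Finset.mem_range] at hn hnot
    rw [powS_eq_zero _ (by simp [oneS, ha]) (by omega), smul_zero]

lemma mulS_invS (a : Word → k) (ha : a [] = 1) : mulS a (invS a) = oneS := by
  funext w
  set x : Word → k := a - oneS with hxdef
  have hx0 : x [] = 0 := by simp [hxdef, oneS, ha]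
  have ha' : a = oneS + x := by rw [hxdef]; abel
  have hpow : ∀ n : ℕ, mulS a (powS x n) = powS x n + powS x (n + 1) := by
    intro n
    conv_lhs => rw [ha']
    rw [mulS_add_left, oneS_mulS]
    rfl
  set M := w.length with hM
  set G : Word → k := ∑ n ∈ Finset.range (M + 1), (-1 : k) ^ n • powS x n with hG
  have h1 : mulS a (invS a) w = mulS a G w := by
    refine mulS_congr (fun u _ => rfl) (fun u hu => ?_)
    rw [invS_ext a ha u (by omega : u.length < M + 1), hG, Finset.sum_apply]
    refine Finset.sum_congr rfl fun n _ => ?_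
    rw [Pi.smul_apply, ← hxdef]
  rw [h1, hG, mulS_sum_right, Finset.sum_apply]
  have h2 : ∀ n ∈ Finset.range (M + 1), (mulS a ((-1 : k) ^ n • powS x n)) w
      = (fun n => (-1 : k) ^ n * powS x n w) n - (fun n => (-1 : k) ^ n * powS x n w) (n + 1) := by
    intro n hn
    rw [mulS_smul_right, Pi.smul_apply, hpow n, Pi.add_apply, smul_eq_mul]
    simp only [pow_succ]
    ring
  rw [Finset.sum_congr rfl h2, Finset.sum_range_sub']
  rw [powS_eq_zero x hx0 (by omega : w.length < M + 1)]
  simp [powS, oneS]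

lemma invS_mulS (a : Word → k) (ha : a [] = 1) : mulS (invS a) a = oneS := by
  funext w
  set x : Word → k := a - oneS with hxdef
  have hx0 : x [] = 0 := by simp [hxdef, oneS, ha]
  have ha' : a = oneS + x := by rw [hxdef]; abel
  have hpow : ∀ n : ℕ, mulS (powS x n) a = powS x n + powS x (n + 1) := by
    intro n
    conv_lhs => rw [ha']
    rw [mulS_add_right, mulS_oneS, powS_succ']
  set M := w.length with hM
  set G : Word → k := ∑ n ∈ Finset.range (M + 1), (-1 : k) ^ n • powS x n with hG
  have h1 : mulS (invS a) a w = mulS G a w := by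
    refine mulS_congr (fun u hu => ?_) (fun u _ => rfl)
    rw [invS_ext a ha u (by omega : u.length < M + 1), hG, Finset.sum_apply]
    refine Finset.sum_congr rfl fun n _ => ?_
    rw [Pi.smul_apply, ← hxdef]
  rw [h1, hG, mulS_sum_left, Finset.sum_apply]
  have h2 : ∀ n ∈ Finset.range (M + 1), (mulS ((-1 : k) ^ n • powS x n) a) w
      = (fun n => (-1 : k) ^ n * powS x n w) n - (fun n => (-1 : k) ^ n * powS x n w) (n + 1) := by
    intro n hn
    rw [mulS_smul_left, Pi.smul_apply, hpow n, Pi.add_apply, smul_eq_mul]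
    simp only [pow_succ]
    ring
  rw [Finset.sum_congr rfl h2, Finset.sum_range_sub']
  rw [powS_eq_zero x hx0 (by omega : w.length < M + 1)]
  simp [powS, oneS]

lemma eq_of_inv (x a y : Word → k) (hxa : mulS x a = oneS) (hay : mulS a y = oneS) : x = y := by
  have h : mulS x (mulS a y) = mulS (mulS x a) y := (mulS_assoc x a y).symm
  rw [hay, hxa, mulS_oneS, oneS_mulS] at h
  exact h

lemma invS_eq_of (a y : Word → k) (ha : a [] = 1) (h : mulS a y = oneS) : invS a = y :=
  eq_of_inv _ a _ (invS_mulS a ha) h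

lemma invS_mulS_mulS (p q : Word → k) (hp : p [] = 1) (hq : q [] = 1) :
    invS (mulS p q) = mulS (invS q) (invS p) := by
  apply invS_eq_of _ _ (by rw [mulS_apply_nil, hp, hq, one_mul])
  rw [mulS_assoc, ← mulS_assoc q (invS q) (invS p), mulS_invS q hq, oneS_mulS, mulS_invS p hp]

/-! ### wordEval -/

lemma wordEval_nil (a b : Word → k) : wordEval a b [] = oneS := rfl

lemma wordEval_cons (a b : Word → k) (j : Fin 2) (t : Word) :
    wordEval a b (j :: t) = mulS (if j = 0 then a else b) (wordEval a b t) := rfl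

lemma wordEval_append (a b : Word → k) (p q : Word) :
    wordEval a b (p ++ q) = mulS (wordEval a b p) (wordEval a b q) := by
  induction p with
  | nil => rw [List.nil_append, wordEval_nil, oneS_mulS]
  | cons j t ih => rw [List.cons_append, wordEval_cons, ih, wordEval_cons, mulS_assoc]

lemma wordEval_eq_zero (a b : Word → k) (ha : a [] = 0) (hb : b [] = 0) {w u : Word}
    (h : u.length < w.length) : wordEval a b w u = 0 := by
  induction w generalizing u with
  | nil => simp at h
  | cons j t ih =>
    rw [wordEval_cons, mulS]
    refine Finset.sum_eq_zero fun i hi => ?_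
    rw [Finset.mem_range] at hi
    rw [List.length_cons] at h
    rcases Nat.eq_zero_or_pos i with rfl | hpos
    · rw [List.take_zero, show (if j = 0 then a else b) [] = 0 from by split_ifs <;> assumption,
        zero_mul]
    · rw [ih (by rw [List.length_drop]; omega), mul_zero]

/-! ### Words of bounded length as a Finset -/

def wordsLt (N : ℕ) : Finset Word :=
  (Finset.range N).biUnion fun n => Finset.univ.image fun f : Fin n → Fin 2 => List.ofFn f

lemma mem_wordsLt {N : ℕ} {w : Word} : w ∈ wordsLt N ↔ w.length < N := by
  simp only [wordsLt, Finset.mem_biUnion, Finset.mem_range, Finset.mem_image, Finset.mem_univ,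
    true_and]
  constructor
  · rintro ⟨n, hn, f, rfl⟩
    simpa using hn
  · intro h
    exact ⟨w.length, h, w.get, List.ofFn_get w⟩

lemma sum_wordsLt {M : Type*} [AddCommMonoid M] (N : ℕ) (F : Word → M) :
    ∑ w ∈ wordsLt N, F w = ∑ n ∈ Finset.range N, ∑ f : Fin n → Fin 2, F (List.ofFn f) := by
  rw [wordsLt, Finset.sum_biUnion]
  · refine Finset.sum_congr rfl fun n _ => ?_
    rw [Finset.sum_image]
    intro f _ g _ h
    exact List.ofFn_injective h
  · intro m hm n hn hmn
    rw [Function.onFun, Finset.disjoint_left]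
    rintro w hw hw'
    simp only [Finset.mem_image, Finset.mem_univ, true_and] at hw hw'
    obtain ⟨f, rfl⟩ := hw
    obtain ⟨g, hg⟩ := hw'
    have := congrArg List.length hg
    simp at this
    exact hmn this.symm

/-! ### subst lemmas -/

lemma subst_eq_sum (a b φ : Word → k) (u : Word) :
    subst a b φ u = ∑ w ∈ wordsLt (u.length + 1), φ w * wordEval a b w u := by
  rw [subst, sum_wordsLt (u.length + 1) (fun w => φ w * wordEval a b w u)]
  simp [smul_eq_mul]

lemma subst_ext (a b : Word → k) (ha : a [] = 0) (hb : b [] = 0) (φ : Word → k) (u : Word)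
    (N : ℕ) (h : u.length < N) :
    subst a b φ u = ∑ w ∈ wordsLt N, φ w * wordEval a b w u := by
  rw [subst_eq_sum]
  apply Finset.sum_subset
  · intro w hw
    rw [mem_wordsLt] at *
    omega
  · intro w hw hnot
    rw [mem_wordsLt] at hw hnot
    rw [wordEval_eq_zero a b ha hb (by omega), mul_zero]

lemma subst_apply_nil (a b φ : Word → k) : subst a b φ [] = φ [] := by
  rw [subst_eq_sum]
  simp only [List.length_nil, Nat.zero_add]
  rw [show wordsLt 1 = {[]} from by ext w; simp [mem_wordsLt, List.length_eq_zero_iff]]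
  simp [wordEval_nil, oneS]

lemma subst_oneS (a b : Word → k) : subst a b oneS = oneS := by
  funext u
  rw [subst_eq_sum, Finset.sum_eq_single ([] : Word)]
  · rw [wordEval_nil, show oneS ([] : Word) = (1:k) from rfl, one_mul]
  · intro w hw hne
    rw [show oneS w = (0:k) from by simp [oneS, hne], zero_mul]
  · intro h
    exact absurd (mem_wordsLt.mpr (by simp)) h

lemma subst_X0S (a b : Word → k) (ha : a [] = 0) (hb : b [] = 0) : subst a b X0S = a := by
  funext u
  rw [subst_ext a b ha hb _ u (u.length + 2) (by omega), Finset.sum_eq_single ([0] : Word)]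
  · have h1 : wordEval a b [0] = a := by
      rw [wordEval_cons, wordEval_nil, if_pos rfl, mulS_oneS]
    rw [h1, show X0S ([0] : Word) = (1:k) from by simp [X0S, XS], one_mul]
  · intro w hw hne
    rw [show X0S w = (0:k) from by simp [X0S, XS, hne], zero_mul]
  · intro h
    exact absurd (mem_wordsLt.mpr (by simp)) h

lemma subst_X1S (a b : Word → k) (ha : a [] = 0) (hb : b [] = 0) : subst a b X1S = b := by
  funext u
  rw [subst_ext a b ha hb _ u (u.length + 2) (by omega), Finset.sum_eq_single ([1] : Word)]
  · have h1 : wordEval a b [1] = b := by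
      rw [wordEval_cons, wordEval_nil, if_neg (by decide), mulS_oneS]
    rw [h1, show X1S ([1] : Word) = (1:k) from by simp [X1S, XS], one_mul]
  · intro w hw hne
    rw [show X1S w = (0:k) from by simp [X1S, XS, hne], zero_mul]
  · intro h
    exact absurd (mem_wordsLt.mpr (by simp)) h

lemma subst_mulS (a b : Word → k) (ha : a [] = 0) (hb : b [] = 0) (φ ψ : Word → k) :
    subst a b (mulS φ ψ) = mulS (subst a b φ) (subst a b ψ) := by
  funext u
  set N := u.length + 1 with hN
  have hR : mulS (subst a b φ) (subst a b ψ) u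
      = ∑ pq ∈ wordsLt N ×ˢ wordsLt N,
          φ pq.1 * ψ pq.2 * wordEval a b (pq.1 ++ pq.2) u := by
    have h1 : ∀ i ∈ Finset.range (u.length + 1),
        subst a b φ (u.take i) * subst a b ψ (u.drop i)
        = ∑ pq ∈ wordsLt N ×ˢ wordsLt N,
            φ pq.1 * ψ pq.2 * (wordEval a b pq.1 (u.take i) * wordEval a b pq.2 (u.drop i)) := by
      intro i hi
      rw [subst_ext a b ha hb φ _ N (by rw [List.length_take]; omega),
        subst_ext a b ha hb ψ _ N (by rw [List.length_drop]; omega),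
        Finset.sum_mul_sum, ← Finset.sum_product']
      exact Finset.sum_congr rfl fun pq _ => by ring
    rw [mulS, Finset.sum_congr rfl h1, Finset.sum_comm]
    refine Finset.sum_congr rfl fun pq _ => ?_
    rw [← Finset.mul_sum, wordEval_append, mulS]
  have hσ : subst a b (mulS φ ψ) u
      = ∑ x ∈ (wordsLt N).sigma (fun w => Finset.range (w.length + 1)),
          φ (x.1.take x.2) * ψ (x.1.drop x.2) * wordEval a b x.1 u := by
    rw [subst_ext a b ha hb _ u N (by omega), Finset.sum_sigma]
    refine Finset.sum_congr rfl fun w _ => ?_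
    rw [mulS, Finset.sum_mul]
  rw [hσ, hR]
  rw [← Finset.sum_filter_add_sum_filter_not (wordsLt N ×ˢ wordsLt N)
    (fun pq => pq.1.length + pq.2.length < N)]
  have hzero : ∑ pq ∈ (wordsLt N ×ˢ wordsLt N).filter
        (fun pq => ¬ pq.1.length + pq.2.length < N),
      φ pq.1 * ψ pq.2 * wordEval a b (pq.1 ++ pq.2) u = 0 := by
    refine Finset.sum_eq_zero fun pq hpq => ?_
    simp only [Finset.mem_filter] at hpq
    rw [wordEval_eq_zero a b ha hb (by rw [List.length_append]; omega), mul_zero]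
  rw [hzero, add_zero]
  refine Finset.sum_nbij' (i := fun x => (x.1.take x.2, x.1.drop x.2))
    (j := fun pq => ⟨pq.1 ++ pq.2, pq.1.length⟩) ?_ ?_ ?_ ?_ ?_
  · rintro ⟨w, i⟩ hx
    simp only [Finset.mem_sigma, Finset.mem_range, mem_wordsLt] at hx
    simp only [Finset.mem_filter, Finset.mem_product, mem_wordsLt, List.length_take,
      List.length_drop]
    omega
  · rintro ⟨p, q⟩ hpq
    simp only [Finset.mem_filter, Finset.mem_product, mem_wordsLt] at hpq
    simp only [Finset.mem_sigma, Finset.mem_range, mem_wordsLt, List.length_append]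
    omega
  · rintro ⟨w, i⟩ hx
    simp only [Finset.mem_sigma, Finset.mem_range, mem_wordsLt] at hx
    have h1 : (w.take i).length = i := by rw [List.length_take]; omega
    simp only
    rw [h1, List.take_append_drop]
  · rintro ⟨p, q⟩ hpq
    simp only [Prod.mk.injEq]
    exact ⟨List.take_left, List.drop_left⟩
  · rintro ⟨w, i⟩ hx
    simp only
    rw [List.take_append_drop]

lemma subst_wordEval (a b c d : Word → k) (ha : a [] = 0) (hb : b [] = 0) (v : Word) :
    subst a b (wordEval c d v) = wordEval (subst a b c) (subst a b d) v := by
  induction v with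
  | nil => rw [wordEval_nil, wordEval_nil, subst_oneS]
  | cons j t ih =>
    rw [wordEval_cons, wordEval_cons, subst_mulS a b ha hb, ih]
    congr 1
    split_ifs <;> rfl

lemma subst_subst (a b c d φ : Word → k) (ha : a [] = 0) (hb : b [] = 0)
    (hc : c [] = 0) (hd : d [] = 0) :
    subst a b (subst c d φ) = subst (subst a b c) (subst a b d) φ := by
  have ha' : subst a b c [] = 0 := by rw [subst_apply_nil]; exact hc
  have hb' : subst a b d [] = 0 := by rw [subst_apply_nil]; exact hd
  funext u
  set N := u.length + 1 with hN
  rw [subst_ext a b ha hb _ u N (by omega), subst_ext _ _ ha' hb' φ u N (by omega)]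
  have step : ∀ w ∈ wordsLt N, subst c d φ w * wordEval a b w u
      = ∑ v ∈ wordsLt N, φ v * (wordEval c d v w * wordEval a b w u) := by
    intro w hw
    rw [mem_wordsLt] at hw
    rw [subst_ext c d hc hd φ w N (by omega), Finset.sum_mul]
    exact Finset.sum_congr rfl fun v _ => by ring
  rw [Finset.sum_congr rfl step, Finset.sum_comm]
  refine Finset.sum_congr rfl fun v _ => ?_
  rw [← Finset.mul_sum]
  congr 1
  rw [← subst_ext a b ha hb (wordEval c d v) u N (by omega),
    subst_wordEval a b c d ha hb]

lemma subst_invS (a b g : Word → k) (ha : a [] = 0) (hb : b [] = 0) (hg : g [] = 1) :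
    subst a b (invS g) = invS (subst a b g) := by
  have h1 : subst a b g [] = 1 := by rw [subst_apply_nil]; exact hg
  symm
  apply invS_eq_of _ _ h1
  rw [← subst_mulS a b ha hb, mulS_invS g hg, subst_oneS]

/-! ### Conjugation -/

def conjS (g x : Word → k) : Word → k := mulS g (mulS x (invS g))

lemma conjS_apply_nil (g x : Word → k) (hg : g [] = 1) : conjS g x [] = x [] := by
  rw [conjS, mulS_apply_nil, mulS_apply_nil, invS_apply_nil, hg, one_mul, mul_one]

lemma conjS_mulS (g x y : Word → k) (hg : g [] = 1) :
    mulS (conjS g x) (conjS g y) = conjS g (mulS x y) := by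
  unfold conjS
  rw [mulS_assoc g (mulS x (invS g)) _, mulS_assoc x (invS g) _,
    ← mulS_assoc (invS g) g _, invS_mulS g hg, oneS_mulS, ← mulS_assoc x y _]

lemma conjS_oneS (g : Word → k) (hg : g [] = 1) : conjS g oneS = oneS := by
  rw [conjS, oneS_mulS, mulS_invS g hg]

lemma wordEval_conjS (g a b : Word → k) (hg : g [] = 1) (v : Word) :
    wordEval (conjS g a) (conjS g b) v = conjS g (wordEval a b v) := by
  induction v with
  | nil => rw [wordEval_nil, wordEval_nil, conjS_oneS g hg]
  | cons j t ih =>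
    rw [wordEval_cons, wordEval_cons, ih, ← conjS_mulS g _ _ hg]
    congr 1
    split_ifs <;> rfl

lemma conjS_sum {ι : Type*} (g : Word → k) (s : Finset ι) (c : ι → k) (F : ι → Word → k) :
    conjS g (∑ v ∈ s, c v • F v) = ∑ v ∈ s, c v • conjS g (F v) := by
  unfold conjS
  rw [mulS_sum_left]
  rw [Finset.sum_congr rfl fun v (_ : v ∈ s) => mulS_smul_left (c v) (F v) (invS g)]
  rw [mulS_sum_right]
  exact Finset.sum_congr rfl fun v _ => mulS_smul_right (c v) g _

lemma subst_conjS (g a b φ : Word → k) (hg : g [] = 1) (ha : a [] = 0) (hb : b [] = 0) :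
    subst (conjS g a) (conjS g b) φ = conjS g (subst a b φ) := by
  funext u
  set N := u.length + 1 with hN
  have hca : conjS g a [] = 0 := by rw [conjS_apply_nil g a hg]; exact ha
  have hcb : conjS g b [] = 0 := by rw [conjS_apply_nil g b hg]; exact hb
  rw [subst_ext _ _ hca hcb φ u N (by omega)]
  have hL : ∀ v ∈ wordsLt N, φ v * wordEval (conjS g a) (conjS g b) v u
      = φ v * conjS g (wordEval a b v) u := by
    intro v _
    rw [wordEval_conjS g a b hg]
  rw [Finset.sum_congr rfl hL]
  set G : Word → k := ∑ v ∈ wordsLt N, φ v • wordEval a b v with hGdef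
  have hagree : ∀ s : Word, s.length ≤ u.length → subst a b φ s = G s := by
    intro s hs
    rw [subst_ext a b ha hb φ s N (by omega), hGdef, Finset.sum_apply]
    exact Finset.sum_congr rfl fun v _ => by rw [Pi.smul_apply, smul_eq_mul]
  have hR : conjS g (subst a b φ) u = conjS g G u := by
    unfold conjS
    refine mulS_congr (fun s _ => rfl) (fun s hsu => ?_)
    exact mulS_congr (fun t ht => hagree t (le_trans ht hsu)) (fun t _ => rfl)
  rw [hR, hGdef, conjS_sum, Finset.sum_apply]
  exact Finset.sum_congr rfl fun v _ => by rw [Pi.smul_apply, smul_eq_mul]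

/-! ### The key lemmas for grtMul -/

def AS (g : Word → k) : Word → k := mulS g (mulS X0S (invS g))

lemma X0S_nil : (X0S : Word → k) [] = 0 := by simp [X0S, XS]
lemma X1S_nil : (X1S : Word → k) [] = 0 := by simp [X1S, XS]
lemma AS_nil (g : Word → k) : AS g [] = 0 := by
  rw [AS, mulS_apply_nil, mulS_apply_nil, X0S_nil]; ring

lemma keyA (p q : Word → k) (hp : p [] = 1) (hq : q [] = 1) :
    subst (AS q) X1S (AS p) = AS (mulS (subst (AS q) X1S p) q) := by
  have hpn : subst (mulS q (mulS X0S (invS q))) X1S p [] = 1 := by rw [subst_apply_nil]; exact hp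
  rw [show AS p = mulS p (mulS X0S (invS p)) from rfl]
  rw [subst_mulS _ _ (AS_nil q) X1S_nil, subst_mulS _ _ (AS_nil q) X1S_nil,
    subst_X0S _ _ (AS_nil q) X1S_nil, subst_invS _ _ p (AS_nil q) X1S_nil hp]
  simp only [AS]
  rw [invS_mulS_mulS _ q hpn hq]
  simp only [mulS_assoc]

/-- The GRT multiplication satisfies the alternative expression
φ₂ ∘ φ₁ = φ₂·φ₁(X₀, φ₂⁻¹X₁φ₂) and is associative. -/
theorem grtMul_alt_and_assoc (φ₁ φ₂ φ₃ : Word → k)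
    (h₁ : φ₁ [] = 1) (h₂ : φ₂ [] = 1) (h₃ : φ₃ [] = 1) :
    grtMul φ₂ φ₁ = mulS φ₂ (subst X0S (mulS (invS φ₂) (mulS X1S φ₂)) φ₁) ∧
      grtMul (grtMul φ₃ φ₂) φ₁ = grtMul φ₃ (grtMul φ₂ φ₁) := by
  constructor
  · have hB : (mulS (invS φ₂) (mulS X1S φ₂)) [] = 0 := by
      rw [mulS_apply_nil, mulS_apply_nil, invS_apply_nil, X1S_nil]; ring
    have hconjB : conjS φ₂ (mulS (invS φ₂) (mulS X1S φ₂)) = X1S := by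
      unfold conjS
      rw [mulS_assoc (invS φ₂) (mulS X1S φ₂) (invS φ₂), mulS_assoc X1S φ₂ (invS φ₂),
        mulS_invS φ₂ h₂, mulS_oneS, ← mulS_assoc φ₂ (invS φ₂) X1S, mulS_invS φ₂ h₂, oneS_mulS]
    have hsub := subst_conjS φ₂ X0S (mulS (invS φ₂) (mulS X1S φ₂)) φ₁ h₂ X0S_nil hB
    rw [hconjB] at hsub
    show mulS (subst (conjS φ₂ X0S) X1S φ₁) φ₂ = _
    rw [hsub]
    unfold conjS
    rw [mulS_assoc φ₂ _ φ₂, mulS_assoc _ (invS φ₂) φ₂, invS_mulS φ₂ h₂, mulS_oneS]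
  · have e1 : grtMul φ₃ φ₂ = mulS (subst (AS φ₃) X1S φ₂) φ₃ := rfl
    have e2 := keyA φ₂ φ₃ h₂ h₃
    have e3 : subst (subst (AS φ₃) X1S (AS φ₂)) X1S φ₁
        = subst (AS φ₃) X1S (subst (AS φ₂) X1S φ₁) := by
      rw [subst_subst (AS φ₃) X1S (AS φ₂) X1S φ₁ (AS_nil φ₃) X1S_nil (AS_nil φ₂) X1S_nil,
        subst_X1S (AS φ₃) X1S (AS_nil φ₃) X1S_nil]
    show mulS (subst (AS (grtMul φ₃ φ₂)) X1S φ₁) (grtMul φ₃ φ₂)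
        = mulS (subst (AS φ₃) X1S (mulS (subst (AS φ₂) X1S φ₁) φ₂)) φ₃
    rw [e1, ← e2, e3, subst_mulS (AS φ₃) X1S (AS_nil φ₃) X1S_nil (subst (AS φ₂) X1S φ₁) φ₂]
    simp only [mulS_assoc]
end
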